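/- arXiv:math-ph/0505025 — 6 statements merged into one kernel-verified Lean document; each statement's English description precedes it below -/
import Mathlib

section
/- Let A, Ã, B, B̃ be real 3×3 matrices with B and B̃ invertible. Suppose that for all indices α, β, γ, δ ∈ {1, 2, 3} one has A_{αγ}·B̃_{βδ} + Ã_{αδ}·B_{βγ} = A_{βγ}·B̃_{αδ} + Ã_{βδ}·B_{αγ}. Then there exists a constant a ∈ ℝ such that A = a·B and Ã = a·B̃. -/
/-- Algebraic lemma: if `A_{αγ}·B̃_{βδ} + Ã_{αδ}·B_{βγ} = A_{βγ}·B̃_{αδ} + Ã_{βδ}·B_{αγ}`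
for all indices, with `B`, `B̃` invertible, then `A = a·B` and `Ã = a·B̃` for a constant `a`. -/
theorem matrix_identity_solutions
    (A At B Bt : Matrix (Fin 3) (Fin 3) ℝ)
    (hB : IsUnit B.det) (hBt : IsUnit Bt.det)
    (h : ∀ α β γ δ : Fin 3,
      A α γ * Bt β δ + At α δ * B β γ = A β γ * Bt α δ + At β δ * B α γ) :
    ∃ a : ℝ, A = a • B ∧ At = a • Bt := by
  have hBBi : B * B⁻¹ = 1 := Matrix.mul_nonsing_inv B hB
  have hBtBti : Bt * Bt⁻¹ = 1 := Matrix.mul_nonsing_inv Bt hBt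
  set P := A * B⁻¹ with hP
  set Q := At * Bt⁻¹ with hQ
  have expand : ∀ α β j k : Fin 3,
      P α j * (Bt * Bt⁻¹) β k + Q α k * (B * B⁻¹) β j
        = ∑ γ : Fin 3, ∑ δ : Fin 3,
            (A α γ * Bt β δ + At α δ * B β γ) * (B⁻¹ γ j * Bt⁻¹ δ k) := by
    intro α β j k
    simp only [hP, hQ, Matrix.mul_apply, Fin.sum_univ_three]
    ring
  have key : ∀ α β j k : Fin 3,
      P α j * (Bt * Bt⁻¹) β k + Q α k * (B * B⁻¹) β j
        = P β j * (Bt * Bt⁻¹) α k + Q β k * (B * B⁻¹) α j := by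
    intro α β j k
    rw [expand α β j k, expand β α j k]
    exact Finset.sum_congr rfl fun γ _ => Finset.sum_congr rfl fun δ _ => by
      rw [h α β γ δ]
  simp only [hBBi, hBtBti] at key
  have key' : ∀ α β j k : Fin 3,
      P α j * (if β = k then (1:ℝ) else 0) + Q α k * (if β = j then (1:ℝ) else 0)
        = P β j * (if α = k then (1:ℝ) else 0) + Q β k * (if α = j then (1:ℝ) else 0) := by
    intro α β j k
    simpa [Matrix.one_apply] using key α β j k
  -- off-diagonal entries of P vanish
  have p01 : P 0 1 = 0 := by simpa using key' 0 2 1 2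
  have p02 : P 0 2 = 0 := by simpa using key' 0 1 2 1
  have p10 : P 1 0 = 0 := by simpa using key' 1 2 0 2
  have p12 : P 1 2 = 0 := by simpa using key' 1 0 2 0
  have p20 : P 2 0 = 0 := by simpa using key' 2 1 0 1
  have p21 : P 2 1 = 0 := by simpa using key' 2 0 1 0
  -- off-diagonal entries of Q vanish
  have q01 : Q 0 1 = 0 := by simpa using key' 0 2 2 1
  have q02 : Q 0 2 = 0 := by simpa using key' 0 1 1 2
  have q10 : Q 1 0 = 0 := by simpa using key' 1 2 2 0
  have q12 : Q 1 2 = 0 := by simpa using key' 1 0 0 2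
  have q20 : Q 2 0 = 0 := by simpa using key' 2 1 1 0
  have q21 : Q 2 1 = 0 := by simpa using key' 2 0 0 1
  -- diagonal entries all equal
  have d1 : P 0 0 = Q 2 2 := by simpa using key' 0 2 0 2
  have d2 : P 1 1 = Q 2 2 := by simpa using key' 1 2 1 2
  have d3 : P 1 1 = Q 0 0 := by simpa using key' 1 0 1 0
  have d4 : P 2 2 = Q 0 0 := by simpa using key' 2 0 2 0
  have d5 : P 0 0 = Q 1 1 := by simpa using key' 0 1 0 1
  refine ⟨P 0 0, ?_, ?_⟩
  · have hPa : P = P 0 0 • (1 : Matrix (Fin 3) (Fin 3) ℝ) := by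
      ext i j
      fin_cases i <;> fin_cases j <;>
        norm_num [Matrix.smul_apply, Matrix.one_apply, Fin.ext_iff] <;>
        first
          | exact p01 | exact p02 | exact p10 | exact p12 | exact p20 | exact p21
          | exact d2.trans d1.symm
          | exact (d4.trans d3.symm).trans (d2.trans d1.symm)
    have hA : P * B = A := by
      rw [hP, Matrix.mul_assoc, Matrix.nonsing_inv_mul B hB, Matrix.mul_one]
    conv_lhs => rw [← hA, hPa]
    rw [Matrix.smul_mul, Matrix.one_mul]
  · have hQa : Q = P 0 0 • (1 : Matrix (Fin 3) (Fin 3) ℝ) := by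
      ext i j
      fin_cases i <;> fin_cases j <;>
        norm_num [Matrix.smul_apply, Matrix.one_apply, Fin.ext_iff] <;>
        first
          | exact q01 | exact q02 | exact q10 | exact q12 | exact q20 | exact q21
          | exact d3.symm.trans (d2.trans d1.symm)
          | exact d5.symm
          | exact d1.symm
    have hAt : Q * Bt = At := by
      rw [hQ, Matrix.mul_assoc, Matrix.nonsing_inv_mul Bt hBt, Matrix.mul_one]
    conv_lhs => rw [← hAt, hQa]
    rw [Matrix.smul_mul, Matrix.one_mul]
end

section
/- Let C, C̃ be real 3×3 matrices such that for all indices α, β, γ, δ ∈ {1, 2, 3} one has C_{αγ}·δ_{βδ} + C̃_{αδ}·δ_{βγ} = C_{βγ}·δ_{αδ} + C̃_{βδ}·δ_{αγ}, where δ denotes the Kronecker delta. Then there exists a constant a ∈ ℝ such that C = a·I and C̃ = a·I, with I the 3×3 identity matrix. (The conclusion uses that the dimension is at least 3.) -/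
/-- If `C_{αγ}·δ_{βδ} + C̃_{αδ}·δ_{βγ} = C_{βγ}·δ_{αδ} + C̃_{βδ}·δ_{αγ}` for all indices
(in dimension 3), then `C` and `C̃` are the same multiple of the identity. -/
theorem kronecker_identity_solutions
    (C Ct : Matrix (Fin 3) (Fin 3) ℝ)
    (h : ∀ α β γ δ : Fin 3,
      C α γ * (if β = δ then (1:ℝ) else 0) + Ct α δ * (if β = γ then (1:ℝ) else 0) =
        C β γ * (if α = δ then (1:ℝ) else 0) + Ct β δ * (if α = γ then (1:ℝ) else 0)) :
    ∃ a : ℝ, C = a • (1 : Matrix (Fin 3) (Fin 3) ℝ) ∧ Ct = a • (1 : Matrix (Fin 3) (Fin 3) ℝ) := by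
  -- off-diagonal entries of Ct vanish (needs a third index β)
  have hT : ∀ α μ β : Fin 3, α ≠ μ → β ≠ α → β ≠ μ → Ct α μ = 0 := by
    intro α μ β hαμ hβα hβμ
    have := h α β β μ
    simp [hβμ, hαμ, hβα.symm, (hβα.symm : α ≠ β)] at this
    exact this
  -- off-diagonal entries of C vanish (take γ = δ = μ, plus hT)
  have hC : ∀ α μ β : Fin 3, α ≠ μ → β ≠ α → β ≠ μ → C α μ = 0 := by
    intro α μ β hαμ hβα hβμ
    have e := h α μ μ μ
    simp [hαμ, (hαμ.symm : μ ≠ α)] at e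
    have := hT α μ β hαμ hβα hβμ
    linarith
  -- diagonal relation: C α α = Ct β β for α ≠ β
  have hd : ∀ α β : Fin 3, α ≠ β → C α α = Ct β β := by
    intro α β hαβ
    have := h α β α β
    simp [hαβ, hαβ.symm] at this
    linarith
  refine ⟨C 0 0, ?_, ?_⟩ <;> ext i j <;> fin_cases i <;> fin_cases j <;>
    simp only [Matrix.smul_apply, Matrix.one_apply, Fin.isValue] <;> norm_num
  · exact hC 0 1 2 (by decide) (by decide) (by decide)
  · exact hC 0 2 1 (by decide) (by decide) (by decide)
  · exact hC 1 0 2 (by decide) (by decide) (by decide)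
  · linarith [hd 1 2 (by decide), hd 0 2 (by decide)]
  · exact hC 1 2 0 (by decide) (by decide) (by decide)
  · exact hC 2 0 1 (by decide) (by decide) (by decide)
  · exact hC 2 1 0 (by decide) (by decide) (by decide)
  · show C 2 2 = C 0 0; linarith [hd 2 1 (by decide), hd 0 1 (by decide)]
  · linarith [hd 1 0 (by decide), hd 1 2 (by decide), hd 0 2 (by decide)]
  · exact hT 0 1 2 (by decide) (by decide) (by decide)
  · exact hT 0 2 1 (by decide) (by decide) (by decide)
  · exact hT 1 0 2 (by decide) (by decide) (by decide)
  · linarith [hd 0 1 (by decide)]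
  · exact hT 1 2 0 (by decide) (by decide) (by decide)
  · exact hT 2 0 1 (by decide) (by decide) (by decide)
  · exact hT 2 1 0 (by decide) (by decide) (by decide)
  · show Ct 2 2 = C 0 0; linarith [hd 0 2 (by decide)]
end

section
/- Fix a ≥ 1, set ω₀ = √3·(√a − 1/√a), and let ω(k) = (ω₀² + 2·Σ_{j=1}^{3}(1 − cos(2πk^j)))^{1/2} be the nearest-neighbor dispersion relation. Then for all k, q ∈ ℝ³ one has the Lipschitz-type bound |ω(k + q) − ω(k)| ≤ a^{−1/2}·(2·Σ_{j=1}^{3}(1 − cos(2πq^j)))^{1/2}. -/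
/-!
Write `A = ω(k+q)²`, `B = ω(k)²`, `F = 2∑ⱼ(1 - cos 2πqʲ)`, and put `sⱼ = sin(2πkʲ + πqʲ)`,
`tⱼ = sin(πqʲ)`. Then `A - B = 4⟨s, t⟩` and `F = 4‖t‖²`, while the pointwise identity
`sq_sub_cos_add_sq_sin` summed over `j`, together with `a ω₀² = 3(a - 1)²`, gives
`4a²‖s‖² + F ≤ 2a(A + B)`. By Cauchy–Schwarz, `a²(A - B)² ≤ F(2a(A + B) - F)`, and this
quadratic constraint forces `(√A - √B)² ≤ F / a`.
-/

open Real

/-- The nearest-neighbor dispersion relation on `ℤ³` with on-site frequency `ω₀`. -/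
noncomputable def nnDispersion (ω₀ : ℝ) (k : Fin 3 → ℝ) : ℝ :=
  Real.sqrt (ω₀ ^ 2 + 2 * ∑ j : Fin 3, (1 - Real.cos (2 * π * k j)))

open Finset

-- With `α = √A`, `β = √B` the hypothesis reads `((α - β)² - c) * ((α + β)² - c) ≤ 0`.
lemma abs_sqrt_sub_sqrt_le_sqrt {A B c : ℝ} (hA : 0 ≤ A) (hB : 0 ≤ B)
    (h : (A - B) ^ 2 ≤ c * (2 * (A + B) - c)) : |√A - √B| ≤ √c := by
  have hα := sq_sqrt hA
  have hβ := sq_sqrt hB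
  have hsq : (√A - √B) ^ 2 ≤ c := by
    by_contra! hlt
    have hsum : (√A - √B) ^ 2 ≤ (√A + √B) ^ 2 := by
      nlinarith [sqrt_nonneg A, sqrt_nonneg B]
    have hfactor : ((√A - √B) ^ 2 - c) * ((√A + √B) ^ 2 - c) =
        (√A ^ 2 - √B ^ 2) ^ 2 - c * (2 * (√A ^ 2 + √B ^ 2) - c) := by ring
    rw [hα, hβ] at hfactor
    nlinarith [mul_pos (sub_pos.2 hlt) (sub_pos.2 (hlt.trans_le hsum))]
  simpa [sqrt_sq_eq_abs] using sqrt_le_sqrt hsq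

lemma one_sub_cos_eq_two_mul_sin_sq (y : ℝ) : 1 - cos y = 2 * sin (y / 2) ^ 2 := by
  rw [sin_sq_eq_half_sub]; ring_nf

lemma cos_sub_cos_add (x y : ℝ) : cos x - cos (x + y) = 2 * sin (x + y / 2) * sin (y / 2) := by
  rw [cos_sub_cos, show (x - (x + y)) / 2 = -(y / 2) by ring, sin_neg]
  ring_nf

lemma sq_sub_cos_add_sq_sin (a x y : ℝ) :
    (a - 1) ^ 2 + a * (1 - cos x) + a * (1 - cos (x + y)) - a ^ 2 * sin (x + y / 2) ^ 2
      - (1 - cos y) / 2 = (a * cos (x + y / 2) - cos (y / 2)) ^ 2 := by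
  have hx : cos x = cos (x + y / 2) * cos (y / 2) + sin (x + y / 2) * sin (y / 2) := by
    rw [← cos_sub, add_sub_cancel_right]
  have hxy : cos (x + y) = cos (x + y / 2) * cos (y / 2) - sin (x + y / 2) * sin (y / 2) := by
    rw [← cos_add, add_assoc, add_halves]
  have hy : cos y = 2 * cos (y / 2) ^ 2 - 1 := by rw [← cos_two_mul, mul_div_cancel₀ _ two_ne_zero]
  rw [hx, hxy, hy]
  nlinarith [sin_sq_add_cos_sq (x + y / 2), sin_sq_add_cos_sq (y / 2)]

lemma abs_sqrt_sum_one_sub_cos_add_sub_le {ι : Type*} [Fintype ι] {a w : ℝ} (ha : 0 < a)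
    (hw : a * w = Fintype.card ι * (a - 1) ^ 2) (x y : ι → ℝ) :
    |√(w + 2 * ∑ j, (1 - cos (x j + y j))) - √(w + 2 * ∑ j, (1 - cos (x j)))| ≤
      (√a)⁻¹ * √(2 * ∑ j, (1 - cos (y j))) := by
  set A := w + 2 * ∑ j, (1 - cos (x j + y j))
  set B := w + 2 * ∑ j, (1 - cos (x j))
  set F := 2 * ∑ j, (1 - cos (y j))
  set s : ι → ℝ := fun j ↦ sin (x j + y j / 2)
  set t : ι → ℝ := fun j ↦ sin (y j / 2)
  have hw0 : 0 ≤ w := by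
    have : 0 ≤ a * w := hw ▸ by positivity
    exact nonneg_of_mul_nonneg_right (by linarith) ha
  have hsum_nonneg : ∀ z : ι → ℝ, 0 ≤ ∑ j, (1 - cos (z j)) := fun z ↦
    sum_nonneg fun j _ ↦ sub_nonneg.2 (cos_le_one _)
  have hA : 0 ≤ A := by have := hsum_nonneg (x + y); simp only [Pi.add_apply] at this; positivity
  have hB : 0 ≤ B := by have := hsum_nonneg x; positivity
  have hF : 0 ≤ F := by have := hsum_nonneg y; positivity
  have hF_eq : F = 4 * ∑ j, t j ^ 2 := by
    simp only [F, t, one_sub_cos_eq_two_mul_sin_sq, ← mul_sum]; ring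
  have hAB : A - B = 4 * ∑ j, s j * t j := by
    calc A - B = 2 * ∑ j, (cos (x j) - cos (x j + y j)) := by
          simp only [A, B, sum_sub_distrib]; ring
      _ = 4 * ∑ j, s j * t j := by
          simp only [s, t, cos_sub_cos_add, mul_sum]; ring_nf
  have hgap : 4 * a ^ 2 * ∑ j, s j ^ 2 + F ≤ 2 * a * (A + B) := by
    rw [← sub_nonneg]
    calc (0 : ℝ) ≤ 4 * ∑ j, (a * cos (x j + y j / 2) - cos (y j / 2)) ^ 2 := by positivity
      _ = 4 * ∑ j, ((a - 1) ^ 2 + a * (1 - cos (x j)) + a * (1 - cos (x j + y j))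
            - a ^ 2 * s j ^ 2 - (1 - cos (y j)) / 2) := by simp only [s, sq_sub_cos_add_sq_sin]
      _ = 2 * a * (A + B) - (4 * a ^ 2 * ∑ j, s j ^ 2 + F) := by
        simp only [A, B, F, sum_sub_distrib, sum_add_distrib, ← mul_sum, ← sum_div, sum_const,
          card_univ, nsmul_eq_mul]
        linear_combination (-4) * hw
  have hcs : a ^ 2 * (A - B) ^ 2 ≤ F * (2 * a * (A + B) - F) :=
    calc a ^ 2 * (A - B) ^ 2 = 16 * a ^ 2 * (∑ j, s j * t j) ^ 2 := by rw [hAB]; ring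
      _ ≤ 16 * a ^ 2 * ((∑ j, s j ^ 2) * ∑ j, t j ^ 2) := by
        gcongr; exact sum_mul_sq_le_sq_mul_sq _ _ _
      _ = F * (4 * a ^ 2 * ∑ j, s j ^ 2) := by rw [hF_eq]; ring
      _ ≤ F * (2 * a * (A + B) - F) := by gcongr; linarith
  calc |√A - √B| ≤ √(F / a) := by
        refine abs_sqrt_sub_sqrt_le_sqrt hA hB ?_
        have hscale : a ^ 2 * (F / a * (2 * (A + B) - F / a)) = F * (2 * a * (A + B) - F) := by
          field_simp
        rwa [← mul_le_mul_iff_of_pos_left (pow_pos ha 2), hscale]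
    _ = (√a)⁻¹ * √F := by rw [sqrt_div' _ ha.le, div_eq_inv_mul]

/-- Lipschitz-type bound for the nearest-neighbor dispersion relation with
`ω₀ = √3·(√a − 1/√a)`: `|ω(k+q) − ω(k)| ≤ a^{−1/2}·(2·Σⱼ(1−cos 2πqʲ))^{1/2}`. -/
theorem nnDispersion_lipschitz_bound (a : ℝ) (ha : 1 ≤ a) (k q : Fin 3 → ℝ) :
    |nnDispersion (Real.sqrt 3 * (Real.sqrt a - 1 / Real.sqrt a)) (k + q) -
        nnDispersion (Real.sqrt 3 * (Real.sqrt a - 1 / Real.sqrt a)) k| ≤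
      (Real.sqrt a)⁻¹ * Real.sqrt (2 * ∑ j : Fin 3, (1 - Real.cos (2 * π * q j))) := by
  have ha0 : 0 < a := by linarith
  have hω₀ : a * (√3 * (√a - 1 / √a)) ^ 2 = Fintype.card (Fin 3) * (a - 1) ^ 2 := by
    have := sqrt_pos.2 ha0
    field_simp
    rw [sq_sqrt (by norm_num), sq_sqrt ha0.le, Fintype.card_fin, Nat.cast_ofNat]
  simp only [nnDispersion, Pi.add_apply, mul_add]
  exact abs_sqrt_sum_one_sub_cos_add_sub_le ha0 hω₀ (fun j ↦ 2 * π * k j) (fun j ↦ 2 * π * q j)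
end

section
/- Let X be a measurable space, ω : X → ℝ a bounded measurable function, and μ a finite measure on X × X × X such that (i) μ-almost every (k₁, k₂, k₃) satisfies ω(k₁) + ω(k₂) = ω(k₃), and (ii) μ is invariant under the swap map (k₁, k₂, k₃) ↦ (k₂, k₁, k₃). Let W : X → [0, ∞) be bounded measurable and set W̃ = 1 + W. Then ∫ (2·ω(k₁) − ω(k₃)) · (W̃(k₁)·W̃(k₂)·W(k₃) − W(k₁)·W(k₂)·W̃(k₃)) dμ(k₁, k₂, k₃) = 0. This is the local conservation of energy under the three-phonon collision operator of the quantum phonon Boltzmann equation: the energy integral of the collision term vanishes. -/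
open MeasureTheory

/-- Local conservation of energy for the three-phonon collision operator of the quantum
phonon Boltzmann equation: the energy integral of the collision term vanishes. -/
theorem quantum_collision_energy_conservation
    {X : Type*} [MeasurableSpace X]
    (ω : X → ℝ) (hωmeas : Measurable ω) (hωbdd : ∃ M : ℝ, ∀ x, |ω x| ≤ M)
    (μ : Measure (X × X × X)) [IsFiniteMeasure μ]
    (hres : ∀ᵐ p ∂μ, ω p.1 + ω p.2.1 = ω p.2.2)
    (hswap : μ.map (fun p : X × X × X => (p.2.1, p.1, p.2.2)) = μ)
    (W : X → ℝ) (hWmeas : Measurable W) (hWnonneg : ∀ x, 0 ≤ W x)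
    (hWbdd : ∃ M : ℝ, ∀ x, W x ≤ M) :
    ∫ p : X × X × X,
        (2 * ω p.1 - ω p.2.2) *
          ((1 + W p.1) * (1 + W p.2.1) * W p.2.2 -
            W p.1 * W p.2.1 * (1 + W p.2.2)) ∂μ = 0 := by
  obtain ⟨M, hM⟩ := hωbdd
  obtain ⟨N, hN⟩ := hWbdd
  set g : X × X × X → ℝ := fun p =>
    (1 + W p.1) * (1 + W p.2.1) * W p.2.2 - W p.1 * W p.2.1 * (1 + W p.2.2) with hg
  set f : X × X × X → ℝ := fun p => (2 * ω p.1 - ω p.2.2) * g p with hf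
  set s : X × X × X → X × X × X := fun p => (p.2.1, p.1, p.2.2) with hs
  have hsmeas : Measurable s := by fun_prop
  have hgmeas : Measurable g := by fun_prop
  have hfmeas : Measurable f := by fun_prop
  have hNnn : 0 ≤ |N| := abs_nonneg _
  have hWle : ∀ x, W x ≤ |N| := fun x => (hN x).trans (le_abs_self N)
  have hgbd : ∀ p, |g p| ≤ (1 + |N|) * (1 + |N|) * |N| + |N| * |N| * (1 + |N|) := by
    intro p
    have h1 : 0 ≤ (1 + W p.1) * (1 + W p.2.1) * W p.2.2 := by
      have := hWnonneg p.1; have := hWnonneg p.2.1; have := hWnonneg p.2.2; positivity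
    have h2 : 0 ≤ W p.1 * W p.2.1 * (1 + W p.2.2) := by
      have := hWnonneg p.1; have := hWnonneg p.2.1; have := hWnonneg p.2.2; positivity
    refine (abs_sub _ _).trans ?_
    rw [abs_of_nonneg h1, abs_of_nonneg h2]
    gcongr <;>
      linarith [hWle p.1, hWnonneg p.1, hWle p.2.1, hWnonneg p.2.1, hWle p.2.2,
        hWnonneg p.2.2]
  set C : ℝ := 3 * |M| * ((1 + |N|) * (1 + |N|) * |N| + |N| * |N| * (1 + |N|)) with hC
  have hωle : ∀ x, |ω x| ≤ |M| := fun x => (hM x).trans (le_abs_self M)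
  have hfbd : ∀ p, ‖f p‖ ≤ C := by
    intro p
    rw [Real.norm_eq_abs, hf, abs_mul]
    refine mul_le_mul ?_ (hgbd p) (abs_nonneg _) (by positivity)
    calc |2 * ω p.1 - ω p.2.2| ≤ |2 * ω p.1| + |ω p.2.2| := abs_sub _ _
      _ = 2 * |ω p.1| + |ω p.2.2| := by rw [abs_mul]; norm_num
      _ ≤ 2 * |M| + |M| := by linarith [hωle p.1, hωle p.2.2]
      _ = 3 * |M| := by ring
  have hfsbd : ∀ p, ‖f (s p)‖ ≤ C := fun p => hfbd (s p)
  have hint : Integrable f μ :=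
    ⟨hfmeas.aestronglyMeasurable, HasFiniteIntegral.of_bounded (ae_of_all _ hfbd)⟩
  have hints : Integrable (fun p => f (s p)) μ :=
    ⟨(hfmeas.comp hsmeas).aestronglyMeasurable,
      HasFiniteIntegral.of_bounded (ae_of_all _ hfsbd)⟩
  have key : ∫ p, f p ∂μ = ∫ p, f (s p) ∂μ := by
    conv_lhs => rw [← hswap]
    rw [integral_map hsmeas.aemeasurable hfmeas.aestronglyMeasurable]
  have hsum : ∫ p, (f p + f (s p)) ∂μ = 0 := by
    refine integral_eq_zero_of_ae ?_
    filter_upwards [hres] with p hp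
    have hgs : g (s p) = g p := by simp only [hg, hs]; ring
    show f p + f (s p) = 0
    simp only [hf, hs, hgs]
    simp only [hg]
    linear_combination (2 * ((1 + W p.1) * (1 + W p.2.1) * W p.2.2 -
      W p.1 * W p.2.1 * (1 + W p.2.2))) * hp
  rw [integral_add hint hints] at hsum
  linarith [key, hsum]
end

section
/- Let X be a measurable space, ω : X → ℝ a bounded measurable function, and μ a finite measure on X × X × X such that (i) μ-almost every (k₁, k₂, k₃) satisfies ω(k₁) + ω(k₂) = ω(k₃), and (ii) μ is invariant under the swap map (k₁, k₂, k₃) ↦ (k₂, k₁, k₃). Let W : X → ℝ be measurable with 0 < c ≤ W ≤ C for some constants c, C, set W̃ = 1 + W and h = log(W̃/W). Then the entropy production σ = ∫ (2·h(k₁) − h(k₃)) · (W̃(k₁)·W̃(k₂)·W(k₃) − W(k₁)·W(k₂)·W̃(k₃)) dμ satisfies σ = ∫ (x − y)·log(x/y) dμ ≥ 0, where x = W̃(k₁)W̃(k₂)W(k₃) and y = W(k₁)W(k₂)W̃(k₃); moreover σ = 0 if and only if W̃(k₁)·W̃(k₂)·W(k₃) = W(k₁)·W(k₂)·W̃(k₃)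 for μ-almost every (k₁, k₂, k₃). This is the H-theorem for the quantum phonon Boltzmann equation. -/
open MeasureTheory

private lemma log_abs_bound {b B t : ℝ} (hb : 0 < b) (h1 : b ≤ t) (h2 : t ≤ B) :
    |Real.log t| ≤ |Real.log b| + |Real.log B| := by
  have hlb := Real.log_le_log hb h1
  have hub := Real.log_le_log (lt_of_lt_of_le hb h1) h2
  rw [abs_le]
  constructor
  · have := neg_abs_le (Real.log b)
    have := abs_nonneg (Real.log B)
    linarith
  · have := le_abs_self (Real.log B)
    have := abs_nonneg (Real.log b)
    linarith

private lemma integrable_of_bound {α : Type*} [MeasurableSpace α] {μ : Measure α}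
    [IsFiniteMeasure μ] {f : α → ℝ} (hf : Measurable f) {K : ℝ} (h : ∀ x, |f x| ≤ K) :
    Integrable f μ :=
  ⟨hf.aestronglyMeasurable, MeasureTheory.HasFiniteIntegral.of_bounded (C := K)
    (ae_of_all _ (fun x => by simpa [Real.norm_eq_abs] using h x))⟩

private lemma ptwise {x y : ℝ} (hx : 0 < x) (hy : 0 < y) :
    ((x - y) * Real.log (x / y) = 0 ↔ x = y) ∧ 0 ≤ (x - y) * Real.log (x / y) := by
  rcases lt_trichotomy x y with h | h | h
  · have hd : x / y < 1 := (div_lt_one hy).2 h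
    have hl : Real.log (x / y) < 0 := Real.log_neg (by positivity) hd
    have hpos : 0 < (x - y) * Real.log (x / y) := mul_pos_of_neg_of_neg (by linarith) hl
    exact ⟨⟨fun h0 => absurd h0 (ne_of_gt hpos), fun he => absurd he (ne_of_lt h)⟩, hpos.le⟩
  · subst h; simp
  · have hd : 1 < x / y := (one_lt_div hy).2 h
    have hl : 0 < Real.log (x / y) := Real.log_pos hd
    have hpos : 0 < (x - y) * Real.log (x / y) := mul_pos (by linarith) hl
    exact ⟨⟨fun h0 => absurd h0 (ne_of_gt hpos), fun he => absurd he (ne_of_gt h)⟩, hpos.le⟩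

/-- H-theorem for the quantum phonon Boltzmann equation: the entropy production
`σ = ∫ (2h(k₁) − h(k₃))·(W̃₁W̃₂W₃ − W₁W₂W̃₃) dμ`, with `h = log(W̃/W)`, equals
`∫ (x − y)·log(x/y) dμ ≥ 0` and vanishes iff detailed balance holds μ-a.e. -/
theorem quantum_H_theorem
    {X : Type*} [MeasurableSpace X]
    (ω : X → ℝ) (hωmeas : Measurable ω) (hωbdd : ∃ M : ℝ, ∀ x, |ω x| ≤ M)
    (μ : Measure (X × X × X)) [IsFiniteMeasure μ]
    (hres : ∀ᵐ p ∂μ, ω p.1 + ω p.2.1 = ω p.2.2)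
    (hswap : μ.map (fun p : X × X × X => (p.2.1, p.1, p.2.2)) = μ)
    (W : X → ℝ) (hWmeas : Measurable W)
    (c C : ℝ) (hc : 0 < c) (hlb : ∀ x, c ≤ W x) (hub : ∀ x, W x ≤ C) :
    (∫ p : X × X × X,
        (2 * Real.log ((1 + W p.1) / W p.1) - Real.log ((1 + W p.2.2) / W p.2.2)) *
          ((1 + W p.1) * (1 + W p.2.1) * W p.2.2 -
            W p.1 * W p.2.1 * (1 + W p.2.2)) ∂μ =
      ∫ p : X × X × X,
        ((1 + W p.1) * (1 + W p.2.1) * W p.2.2 -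
            W p.1 * W p.2.1 * (1 + W p.2.2)) *
          Real.log (((1 + W p.1) * (1 + W p.2.1) * W p.2.2) /
            (W p.1 * W p.2.1 * (1 + W p.2.2))) ∂μ) ∧
    (0 ≤ ∫ p : X × X × X,
        (2 * Real.log ((1 + W p.1) / W p.1) - Real.log ((1 + W p.2.2) / W p.2.2)) *
          ((1 + W p.1) * (1 + W p.2.1) * W p.2.2 -
            W p.1 * W p.2.1 * (1 + W p.2.2)) ∂μ) ∧
    ((∫ p : X × X × X,
        (2 * Real.log ((1 + W p.1) / W p.1) - Real.log ((1 + W p.2.2) / W p.2.2)) *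
          ((1 + W p.1) * (1 + W p.2.1) * W p.2.2 -
            W p.1 * W p.2.1 * (1 + W p.2.2)) ∂μ = 0) ↔
      (∀ᵐ p ∂μ, (1 + W p.1) * (1 + W p.2.1) * W p.2.2 =
        W p.1 * W p.2.1 * (1 + W p.2.2))) := by
  classical
  -- basic positivity and bounds
  have hWpos : ∀ x, 0 < W x := fun x => lt_of_lt_of_le hc (hlb x)
  have hW1pos : ∀ x, 0 < 1 + W x := fun x => by have := hWpos x; linarith
  have hW1lb : ∀ x, c ≤ 1 + W x := fun x => le_trans (hlb x) (by linarith [hWpos x])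
  have hW1ub : ∀ x, 1 + W x ≤ 1 + C := fun x => by linarith [hub x]
  have hWub' : ∀ x, W x ≤ 1 + C := fun x => by linarith [hub x, hWpos x]
  -- the key functions
  set h : X → ℝ := fun k => Real.log ((1 + W k) / W k) with hh
  set f : X × X × X → ℝ := fun p => (1 + W p.1) * (1 + W p.2.1) * W p.2.2 with hfdef
  set g : X × X × X → ℝ := fun p => W p.1 * W p.2.1 * (1 + W p.2.2) with hgdef
  have hfpos : ∀ p, 0 < f p := fun p => by
    have := hW1pos p.1; have := hW1pos p.2.1; have := hWpos p.2.2; positivity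
  have hgpos : ∀ p, 0 < g p := fun p => by
    have := hWpos p.1; have := hWpos p.2.1; have := hW1pos p.2.2; positivity
  have hfub : ∀ p, f p ≤ (1 + C) ^ 3 := by
    intro p
    calc f p ≤ (1 + C) * (1 + C) * (1 + C) := by
          apply mul_le_mul (mul_le_mul (hW1ub p.1) (hW1ub p.2.1) (hW1pos p.2.1).le ?_)
            (hWub' p.2.2) (hWpos p.2.2).le ?_
          · exact le_trans (hW1pos p.1).le (hW1ub p.1)
          · exact mul_nonneg (le_trans (hW1pos p.1).le (hW1ub p.1))
              (le_trans (hW1pos p.2.1).le (hW1ub p.2.1))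
      _ = (1 + C) ^ 3 := by ring
  have hflb : ∀ p, c ^ 3 ≤ f p := by
    intro p
    calc c ^ 3 = c * c * c := by ring
      _ ≤ f p := by
          apply mul_le_mul (mul_le_mul (hW1lb p.1) (hW1lb p.2.1) hc.le (hW1pos p.1).le)
            (hlb p.2.2) hc.le (mul_nonneg (hW1pos p.1).le (hW1pos p.2.1).le)
  have hgub : ∀ p, g p ≤ (1 + C) ^ 3 := by
    intro p
    calc g p ≤ (1 + C) * (1 + C) * (1 + C) := by
          apply mul_le_mul (mul_le_mul (hWub' p.1) (hWub' p.2.1) (hWpos p.2.1).le ?_)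
            (hW1ub p.2.2) (hW1pos p.2.2).le ?_
          · exact le_trans (hWpos p.1).le (hWub' p.1)
          · exact mul_nonneg (le_trans (hWpos p.1).le (hWub' p.1))
              (le_trans (hWpos p.2.1).le (hWub' p.2.1))
      _ = (1 + C) ^ 3 := by ring
  have hglb : ∀ p, c ^ 3 ≤ g p := by
    intro p
    calc c ^ 3 = c * c * c := by ring
      _ ≤ g p := by
          apply mul_le_mul (mul_le_mul (hlb p.1) (hlb p.2.1) hc.le (hWpos p.1).le)
            (hW1lb p.2.2) hc.le (mul_nonneg (hWpos p.1).le (hWpos p.2.1).le)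
  -- bound on h
  set Hb : ℝ := 2 * |Real.log c| + |Real.log (1 + C)| + |Real.log C| with hHb
  have hhval : ∀ k, h k = Real.log (1 + W k) - Real.log (W k) := fun k =>
    Real.log_div (ne_of_gt (hW1pos k)) (ne_of_gt (hWpos k))
  have hhbd : ∀ k, |h k| ≤ Hb := by
    intro k
    rw [hhval k]
    have h1 : |Real.log (1 + W k)| ≤ |Real.log c| + |Real.log (1 + C)| :=
      log_abs_bound hc (hW1lb k) (hW1ub k)
    have h2 : |Real.log (W k)| ≤ |Real.log c| + |Real.log C| :=
      log_abs_bound hc (hlb k) (hub k)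
    calc |Real.log (1 + W k) - Real.log (W k)| ≤ |Real.log (1 + W k)| + |Real.log (W k)| :=
          abs_sub _ _
      _ ≤ Hb := by rw [hHb]; linarith
  -- bound on log(f/g)
  set Lb : ℝ := 2 * |Real.log (c ^ 3)| + 2 * |Real.log ((1 + C) ^ 3)| with hLb
  have hLbd : ∀ p, |Real.log (f p / g p)| ≤ Lb := by
    intro p
    rw [Real.log_div (ne_of_gt (hfpos p)) (ne_of_gt (hgpos p))]
    have hc3 : (0 : ℝ) < c ^ 3 := by positivity
    have h1 : |Real.log (f p)| ≤ |Real.log (c ^ 3)| + |Real.log ((1 + C) ^ 3)| :=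
      log_abs_bound hc3 (hflb p) (hfub p)
    have h2 : |Real.log (g p)| ≤ |Real.log (c ^ 3)| + |Real.log ((1 + C) ^ 3)| :=
      log_abs_bound hc3 (hglb p) (hgub p)
    calc |Real.log (f p) - Real.log (g p)| ≤ |Real.log (f p)| + |Real.log (g p)| := abs_sub _ _
      _ ≤ Lb := by rw [hLb]; linarith
  -- bound on f - g
  have hfgbd : ∀ p, |f p - g p| ≤ 2 * (1 + C) ^ 3 := by
    intro p
    have := hfpos p; have := hgpos p; have := hfub p; have := hgub p
    rw [abs_le]; constructor <;> linarith
  -- measurability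
  have hW1meas : Measurable fun x => 1 + W x := measurable_const.add hWmeas
  have hhmeas : Measurable h := Real.measurable_log.comp (hW1meas.div hWmeas)
  have hfmeas : Measurable f :=
    ((hW1meas.comp measurable_fst).mul
      (hW1meas.comp (measurable_fst.comp measurable_snd))).mul
      (hWmeas.comp (measurable_snd.comp measurable_snd))
  have hgmeas : Measurable g :=
    ((hWmeas.comp measurable_fst).mul
      (hWmeas.comp (measurable_fst.comp measurable_snd))).mul
      (hW1meas.comp (measurable_snd.comp measurable_snd))
  -- the three integrands
  set I1 : X × X × X → ℝ := fun p => (2 * h p.1 - h p.2.2) * (f p - g p) with hI1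
  set I2 : X × X × X → ℝ := fun p => (f p - g p) * Real.log (f p / g p) with hI2
  set D : X × X × X → ℝ := fun p => (h p.1 - h p.2.1) * (f p - g p) with hD
  have hI1meas : Measurable I1 :=
    ((measurable_const.mul (hhmeas.comp measurable_fst)).sub
      (hhmeas.comp (measurable_snd.comp measurable_snd))).mul (hfmeas.sub hgmeas)
  have hI2meas : Measurable I2 :=
    (hfmeas.sub hgmeas).mul (Real.measurable_log.comp (hfmeas.div hgmeas))
  have hDmeas : Measurable D :=
    ((hhmeas.comp measurable_fst).sub
      (hhmeas.comp (measurable_fst.comp measurable_snd))).mul (hfmeas.sub hgmeas)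
  have hI1int : Integrable I1 μ := by
    apply integrable_of_bound hI1meas (K := 3 * Hb * (2 * (1 + C) ^ 3))
    intro p
    rw [hI1, abs_mul]
    apply mul_le_mul _ (hfgbd p) (abs_nonneg _) _
    · have h1 := hhbd p.1; have h2 := hhbd p.2.2
      have := abs_nonneg (h p.1); have := abs_nonneg (h p.2.2)
      rw [abs_le] at *
      constructor <;> [linarith [h1.1, h2.2]; linarith [h1.2, h2.1]]
    · have := hhbd p.1; have := abs_nonneg (h p.1); positivity
  have hI2int : Integrable I2 μ := by
    apply integrable_of_bound hI2meas (K := 2 * (1 + C) ^ 3 * Lb)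
    intro p
    rw [hI2, abs_mul]
    exact mul_le_mul (hfgbd p) (hLbd p) (abs_nonneg _)
      (le_trans (abs_nonneg _) (hfgbd p))
  have hDint : Integrable D μ := by
    apply integrable_of_bound hDmeas (K := 2 * Hb * (2 * (1 + C) ^ 3))
    intro p
    rw [hD, abs_mul]
    apply mul_le_mul _ (hfgbd p) (abs_nonneg _) _
    · have h1 := hhbd p.1; have h2 := hhbd p.2.1
      rw [abs_le] at *
      constructor <;> [linarith [h1.1, h2.2]; linarith [h1.2, h2.1]]
    · have := hhbd p.1; have := abs_nonneg (h p.1); positivity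
  -- pointwise identity: I1 = I2 + D
  have hkey : ∀ p, I1 p = I2 p + D p := by
    intro p
    have hL : Real.log (f p / g p) = h p.1 + h p.2.1 - h p.2.2 := by
      rw [Real.log_div (ne_of_gt (hfpos p)) (ne_of_gt (hgpos p)), hfdef, hgdef]
      simp only
      rw [Real.log_mul (mul_pos (hW1pos p.1) (hW1pos p.2.1)).ne'
            (ne_of_gt (hWpos p.2.2)),
          Real.log_mul (ne_of_gt (hW1pos p.1)) (ne_of_gt (hW1pos p.2.1)),
          Real.log_mul (mul_pos (hWpos p.1) (hWpos p.2.1)).ne' (ne_of_gt (hW1pos p.2.2)),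
          Real.log_mul (ne_of_gt (hWpos p.1)) (ne_of_gt (hWpos p.2.1)),
          hhval p.1, hhval p.2.1, hhval p.2.2]
      ring
    rw [hI1, hI2, hD]
    simp only
    rw [hL]
    ring
  -- the swap map
  set s : X × X × X → X × X × X := fun p => (p.2.1, p.1, p.2.2) with hs
  have hsmeas : Measurable s :=
    (measurable_fst.comp measurable_snd).prodMk
      (measurable_fst.prodMk (measurable_snd.comp measurable_snd))
  have hDanti : ∀ p, D (s p) = -D p := by
    intro p
    rw [hD, hs]
    simp only [hfdef, hgdef]
    ring
  -- ∫ D = 0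
  have hDzero : ∫ p, D p ∂μ = 0 := by
    have step : ∫ p, D p ∂μ = ∫ p, D (s p) ∂μ := by
      conv_lhs => rw [← hswap]
      exact integral_map hsmeas.aemeasurable hDmeas.aestronglyMeasurable
    have step2 : ∫ p, D (s p) ∂μ = -∫ p, D p ∂μ := by
      rw [← integral_neg]
      exact integral_congr_ae (ae_of_all _ fun p => hDanti p)
    linarith [step, step2]
  -- main equality
  have hmain : ∫ p, I1 p ∂μ = ∫ p, I2 p ∂μ := by
    have : ∫ p, I1 p ∂μ = ∫ p, (I2 p + D p) ∂μ :=
      integral_congr_ae (ae_of_all _ hkey)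
    rw [this, integral_add hI2int hDint, hDzero, add_zero]
  -- nonnegativity of I2 pointwise
  have hI2nn : ∀ p, 0 ≤ I2 p := fun p => (ptwise (hfpos p) (hgpos p)).2
  refine ⟨hmain, ?_, ?_⟩
  · rw [hmain]
    exact integral_nonneg hI2nn
  · rw [hmain, integral_eq_zero_iff_of_nonneg hI2nn hI2int]
    constructor
    · intro hae
      filter_upwards [hae] with p hp
      exact ((ptwise (hfpos p) (hgpos p)).1).1 hp
    · intro hae
      filter_upwards [hae] with p hp
      exact ((ptwise (hfpos p) (hgpos p)).1).2 hp
end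

section
/- Let X be a measurable space, ω : X → ℝ a bounded measurable function, and μ a finite measure on X × X × X such that (i) μ-almost every (k₁, k₂, k₃) satisfies ω(k₁) + ω(k₂) = ω(k₃), and (ii) μ is invariant under the swap map (k₁, k₂, k₃) ↦ (k₂, k₁, k₃). Let W : X → ℝ be measurable with 0 < c ≤ W ≤ C for some constants c, C, writing Wᵢ = W(kᵢ). Then ∫ [ (2/W₁)·(W₂W₃ + W₁W₃ − W₁W₂) + (1/W₃)·(W₁W₂ − W₃W₁ − W₃W₂) ] dμ = ∫ W₁·W₂·W₃·(1/W₁ + 1/W₂ − 1/W₃)² dμ ≥ 0. This identifies the entropy production of the classical phonon Boltzmann equation as a manifestly nonnegative quantity. -/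
open MeasureTheory

/-- The entropy production of the classical phonon Boltzmann equation is a manifestly
nonnegative quantity:
`∫ [ (2/W₁)(W₂W₃ + W₁W₃ − W₁W₂) + (1/W₃)(W₁W₂ − W₃W₁ − W₃W₂) ] dμ
  = ∫ W₁W₂W₃ (1/W₁ + 1/W₂ − 1/W₃)² dμ ≥ 0`. -/
theorem classical_entropy_production
    {X : Type*} [MeasurableSpace X]
    (ω : X → ℝ) (hωmeas : Measurable ω) (hωbdd : ∃ M : ℝ, ∀ x, |ω x| ≤ M)
    (μ : Measure (X × X × X)) [IsFiniteMeasure μ]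
    (hres : ∀ᵐ p ∂μ, ω p.1 + ω p.2.1 = ω p.2.2)
    (hswap : μ.map (fun p : X × X × X => (p.2.1, p.1, p.2.2)) = μ)
    (W : X → ℝ) (hWmeas : Measurable W)
    (c C : ℝ) (hc : 0 < c) (hlb : ∀ x, c ≤ W x) (hub : ∀ x, W x ≤ C) :
    (∫ p : X × X × X,
        (2 / W p.1 * (W p.2.1 * W p.2.2 + W p.1 * W p.2.2 - W p.1 * W p.2.1) +
          1 / W p.2.2 * (W p.1 * W p.2.1 - W p.2.2 * W p.1 - W p.2.2 * W p.2.1)) ∂μ =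
      ∫ p : X × X × X,
        W p.1 * W p.2.1 * W p.2.2 * (1 / W p.1 + 1 / W p.2.1 - 1 / W p.2.2) ^ 2 ∂μ) ∧
    (0 ≤ ∫ p : X × X × X,
        W p.1 * W p.2.1 * W p.2.2 * (1 / W p.1 + 1 / W p.2.1 - 1 / W p.2.2) ^ 2 ∂μ) := by
  have hpos : ∀ x, 0 < W x := fun x => lt_of_lt_of_le hc (hlb x)
  set f : X × X × X → ℝ := fun p =>
    2 / W p.1 * (W p.2.1 * W p.2.2 + W p.1 * W p.2.2 - W p.1 * W p.2.1) +
      1 / W p.2.2 * (W p.1 * W p.2.1 - W p.2.2 * W p.1 - W p.2.2 * W p.2.1) with hf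
  set g : X × X × X → ℝ := fun p =>
    W p.1 * W p.2.1 * W p.2.2 * (1 / W p.1 + 1 / W p.2.1 - 1 / W p.2.2) ^ 2 with hg
  set s : X × X × X → X × X × X := fun p => (p.2.1, p.1, p.2.2) with hs
  have hsmeas : Measurable s :=
    (measurable_fst.comp measurable_snd).prodMk
      (measurable_fst.prodMk (measurable_snd.comp measurable_snd))
  have hfmeas : Measurable f := by
    apply Measurable.add
    · exact ((measurable_const.div (hWmeas.comp measurable_fst)).mul
        (((hWmeas.comp (measurable_fst.comp measurable_snd)).mul
          (hWmeas.comp (measurable_snd.comp measurable_snd))).add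
          (((hWmeas.comp measurable_fst).mul
            (hWmeas.comp (measurable_snd.comp measurable_snd)))) |>.sub
          ((hWmeas.comp measurable_fst).mul
            (hWmeas.comp (measurable_fst.comp measurable_snd)))))
    · exact ((measurable_const.div (hWmeas.comp (measurable_snd.comp measurable_snd))).mul
        ((((hWmeas.comp measurable_fst).mul
          (hWmeas.comp (measurable_fst.comp measurable_snd)))).sub
          ((hWmeas.comp (measurable_snd.comp measurable_snd)).mul
            (hWmeas.comp measurable_fst)) |>.sub
          ((hWmeas.comp (measurable_snd.comp measurable_snd)).mul
            (hWmeas.comp (measurable_fst.comp measurable_snd)))))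
  have hbound : ∀ p, |f p| ≤ 9 * C ^ 2 / c := by
    intro p
    obtain ⟨k1, k2, k3⟩ := p
    have ha := hpos k1; have hb := hpos k2; have hw := hpos k3
    have haC := hub k1; have hbC := hub k2; have hwC := hub k3
    have hac := hlb k1; have hbc := hlb k2; have hwc := hlb k3
    have hC : 0 < C := lt_of_lt_of_le ha haC
    have hS1 : |W k2 * W k3 + W k1 * W k3 - W k1 * W k2| ≤ 3 * C ^ 2 := by
      rw [abs_le]
      constructor <;> nlinarith [mul_pos ha hb, mul_pos hb hw, mul_pos ha hw,
        mul_le_mul hbC hwC hw.le hC.le, mul_le_mul haC hwC hw.le hC.le,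
        mul_le_mul haC hbC hb.le hC.le]
    have hS2 : |W k1 * W k2 - W k3 * W k1 - W k3 * W k2| ≤ 3 * C ^ 2 := by
      rw [abs_le]
      constructor <;> nlinarith [mul_pos ha hb, mul_pos hw ha, mul_pos hw hb,
        mul_le_mul haC hbC hb.le hC.le, mul_le_mul hwC haC ha.le hC.le,
        mul_le_mul hwC hbC hb.le hC.le]
    simp only [hf]
    calc |2 / W k1 * (W k2 * W k3 + W k1 * W k3 - W k1 * W k2) +
          1 / W k3 * (W k1 * W k2 - W k3 * W k1 - W k3 * W k2)|
        ≤ |2 / W k1| * |W k2 * W k3 + W k1 * W k3 - W k1 * W k2| +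
          |1 / W k3| * |W k1 * W k2 - W k3 * W k1 - W k3 * W k2| := by
          calc _ ≤ |2 / W k1 * (W k2 * W k3 + W k1 * W k3 - W k1 * W k2)| +
              |1 / W k3 * (W k1 * W k2 - W k3 * W k1 - W k3 * W k2)| := abs_add_le _ _
            _ = _ := by rw [abs_mul, abs_mul]
      _ ≤ (2 / c) * (3 * C ^ 2) + (1 / c) * (3 * C ^ 2) := by
          have hT1 : |2 / W k1| ≤ 2 / c := by
            rw [abs_of_pos (by positivity)]
            exact div_le_div_of_nonneg_left (by norm_num) hc hac
          have hT2 : |1 / W k3| ≤ 1 / c := by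
            rw [abs_of_pos (by positivity)]
            exact div_le_div_of_nonneg_left (by norm_num) hc hwc
          exact add_le_add (mul_le_mul hT1 hS1 (abs_nonneg _) (by positivity))
            (mul_le_mul hT2 hS2 (abs_nonneg _) (by positivity))
      _ = 9 * C ^ 2 / c := by field_simp; ring
  have hint : Integrable f μ := by
    apply Integrable.mono' (integrable_const (9 * C ^ 2 / c)) hfmeas.aestronglyMeasurable
    exact Filter.Eventually.of_forall fun p => by
      simpa [Real.norm_eq_abs] using hbound p
  have hints : Integrable (fun p => f (s p)) μ := by
    have : Integrable f (μ.map s) := by rw [hswap]; exact hint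
    exact (integrable_map_measure hfmeas.aestronglyMeasurable hsmeas.aemeasurable).mp this
  have h1 : ∫ p, f (s p) ∂μ = ∫ p, f p ∂μ := by
    rw [← integral_map hsmeas.aemeasurable hfmeas.aestronglyMeasurable]
    rw [hswap]
  have h3 : ∀ p, f p + f (s p) = 2 * g p := by
    intro p
    have ha := hpos p.1; have hb := hpos p.2.1; have hw := hpos p.2.2
    simp only [hf, hg, hs]
    field_simp
    ring
  have key : ∫ p, f p ∂μ = ∫ p, g p ∂μ := by
    have h2 : ∫ p, (f p + f (s p)) ∂μ = 2 * ∫ p, f p ∂μ := by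
      rw [integral_add hint hints, h1]; ring
    have h4 : ∫ p, (f p + f (s p)) ∂μ = 2 * ∫ p, g p ∂μ := by
      rw [show (fun p => f p + f (s p)) = fun p => 2 * g p from funext h3,
        integral_const_mul]
    linarith [h2, h4]
  refine ⟨key, integral_nonneg fun p => ?_⟩
  have ha := hpos p.1; have hb := hpos p.2.1; have hw := hpos p.2.2
  positivity
end
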